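/- Randomised verifier lower bound: if f : {0,1}^n → {0,1} depends on all its variables, then any randomised decision tree that, for every input x and every valid debate transcript for x, outputs V(transcript, x) correctly with probability at least 2/3, must make at least log₂(n) - 3 queries in the worst case. -/

import Mathlib

/-- A deterministic decision tree over `m` Boolean variables. -/
inductive DT (m : ℕ) : Type where
  | leaf : Bool → DT m
  | node : Fin m → DT m → DT m → DT m

/-- Evaluation of a decision tree on an input. -/
def DT.eval {m : ℕ} : DT m → (Fin m → Bool) → Bool
  | .leaf b, _ => b
  | .node i t0 t1, x => if x i then t1.eval x else t0.eval x

/-- Depth of a decision tree: maximum number of queries on a root-to-leaf path. -/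
def DT.depth {m : ℕ} : DT m → ℕ
  | .leaf _ => 0
  | .node _ t0 t1 => max t0.depth t1.depth + 1

/-- The set of variables queried anywhere in the tree. -/
def DT.vars {m : ℕ} : DT m → Finset (Fin m)
  | .leaf _ => ∅
  | .node i t0 t1 => insert i (t0.vars ∪ t1.vars)

/-- Number of internal (query) nodes of a decision tree. -/
def DT.numNodes {m : ℕ} : DT m → ℕ
  | .leaf _ => 0
  | .node _ t0 t1 => t0.numNodes + t1.numNodes + 1

/-- `f` depends on variable `i` if flipping bit `i` can change the value of `f`. -/
def DependsOnVar {m : ℕ} (f : (Fin m → Bool) → Bool) (i : Fin m) : Prop :=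
  ∃ x : Fin m → Bool, f x ≠ f (Function.update x i (!x i))

/-- The winning condition for Prover 1: `∀ α₁ ∃ β₁ … ∀ α_k ∃ β_k, V(α,β) = true`. -/
def AWins : ℕ → (List Bool → Bool) → Prop
  | 0, V => V [] = true
  | k + 1, V => ∀ a : Bool, ∃ b : Bool, AWins k (fun t => V (a :: b :: t))

/-- The winning condition for Prover 0: `∃ α₁ ∀ β₁ … ∃ α_k ∀ β_k, V(α,β) = false`. -/
def BWins : ℕ → (List Bool → Bool) → Prop
  | 0, V => V [] = false
  | k + 1, V => ∃ a : Bool, ∀ b : Bool, BWins k (fun t => V (a :: b :: t))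

/-- Assemble the input `x` together with the `2k` transcript bits
`α₁, β₁, …, α_k, β_k` into a single input of length `n + 2k`. -/
def assemble (n k : ℕ) (x : Fin n → Bool) (t : List Bool) : Fin (n + 2 * k) → Bool :=
  fun j => if h : (j : ℕ) < n then x ⟨j, h⟩ else t.getD ((j : ℕ) - n) false

/-- A `(k,ℓ)`-debate for `f`: a verifier given by a decision tree of depth at most `ℓ`
on the input bits and the `2k` transcript bits, satisfying the alternating-quantifier
winning conditions. -/
def IsDebate (n k ℓ : ℕ) (f : (Fin n → Bool) → Bool) : Prop :=
  ∃ T : DT (n + 2 * k), T.depth ≤ ℓ ∧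
    ∀ x : Fin n → Bool,
      (f x = true → AWins k (fun t => T.eval (assemble n k x t))) ∧
      (f x = false → BWins k (fun t => T.eval (assemble n k x t)))

/-- Debate query complexity: the least verifier depth `ℓ` over all `(k,ℓ)`-debates for `f`. -/
noncomputable def DQC (n : ℕ) (f : (Fin n → Bool) → Bool) : ℕ :=
  sInf {ℓ | ∃ k, IsDebate n k ℓ f}

/-- The transcript produced after `k` rounds when Prover 0 plays strategy `A`
and Prover 1 plays strategy `B` (each maps the history so far to its next bit). -/
def play (A B : List Bool → Bool) : ℕ → List Bool
  | 0 => []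
  | k + 1 =>
      let h := play A B k
      let a := A h
      h ++ [a, B (h ++ [a])]

/-- `(A, B, T)` is a valid debate system for `f`: the honest prover forces the
correct verdict against every strategy of the dishonest prover. -/
def ValidSystem (n k : ℕ) (f : (Fin n → Bool) → Bool)
    (A B : (Fin n → Bool) → List Bool → Bool) (T : DT (n + 2 * k)) : Prop :=
  ∀ x : Fin n → Bool,
    (f x = false → ∀ B' : List Bool → Bool,
      T.eval (assemble n k x (play (A x) B' k)) = false) ∧
    (f x = true → ∀ A' : List Bool → Bool,
      T.eval (assemble n k x (play A' (B x) k)) = true)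

/-- A transcript is valid for `f` on `x` if it arises from the interaction of the
honest prover with some (possibly dishonest) opposing prover on input `x`. -/
def ValidTranscript (n k : ℕ) (f : (Fin n → Bool) → Bool)
    (A B : (Fin n → Bool) → List Bool → Bool) (x : Fin n → Bool)
    (tr : List Bool) : Prop :=
  (f x = false ∧ ∃ B' : List Bool → Bool, tr = play (A x) B' k) ∨
  (f x = true ∧ ∃ A' : List Bool → Bool, tr = play A' (B x) k)

/-!
For each coordinate `i` pick an input `w i` with `f (w i) = false` whose flip `w' i` at `i` has
`f (w' i) = true`, and let the honest Prover 0 for `w i` play against the honest Prover 1 for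
`w' i`. The resulting transcript is valid for both inputs, so `T` rejects the first verifier input
and accepts the second, and these two inputs differ only in the bit of coordinate `i`.
By a union bound the randomised tree answers both correctly with probability `≥ 1/3`, so on
average over its trees it separates at least `n / 3` of the `n` pairs (Yao's principle). A
deterministic tree separates only pairs whose coordinate it queries, and a tree of depth `q`
queries fewer than `2 ^ q` variables. Hence `n ≤ 3 · 2 ^ q`.
-/

open Finset

namespace DT

variable {m : ℕ}

theorem eval_congr (t : DT m) {x y : Fin m → Bool} (h : ∀ j ∈ t.vars, x j = y j) :
    t.eval x = t.eval y := by
  induction t with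
  | leaf b => rfl
  | node i t0 t1 ih0 ih1 =>
    have hi : x i = y i := h i (mem_insert_self _ _)
    rw [eval, eval, hi, ih0 fun j hj => h j (by simp [vars, hj]),
      ih1 fun j hj => h j (by simp [vars, hj])]

theorem mem_vars_of_eval_update_ne (t : DT m) {x : Fin m → Bool} {j : Fin m} {b : Bool}
    (h : t.eval x ≠ t.eval (Function.update x j b)) : j ∈ t.vars := by
  by_contra hj
  exact h <| t.eval_congr fun l hl => by
    rw [Function.update_of_ne (ne_of_mem_of_not_mem hl hj)]

theorem card_vars_lt_two_pow_depth (t : DT m) : #t.vars < 2 ^ t.depth := by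
  induction t with
  | leaf b => simp [vars, depth]
  | node i t0 t1 ih0 ih1 =>
    have h0 : 2 ^ t0.depth ≤ 2 ^ max t0.depth t1.depth :=
      Nat.pow_le_pow_right two_pos (le_max_left _ _)
    have h1 : 2 ^ t1.depth ≤ 2 ^ max t0.depth t1.depth :=
      Nat.pow_le_pow_right two_pos (le_max_right _ _)
    calc #(insert i (t0.vars ∪ t1.vars)) ≤ #t0.vars + #t1.vars + 1 :=
          (card_insert_le _ _).trans (Nat.add_le_add_right (card_union_le _ _) 1)
      _ < 2 ^ (max t0.depth t1.depth + 1) := by rw [pow_succ]; omega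

theorem card_filter_eval_update_ne_lt {ι : Type*} [Fintype ι] (t : DT m) {e : ι → Fin m}
    (he : Function.Injective e) (x : ι → Fin m → Bool) (b : ι → Bool) :
    #{i | t.eval (x i) ≠ t.eval (Function.update (x i) (e i) (b i))} < 2 ^ t.depth :=
  (card_le_card_of_injOn e (fun _ hi => t.mem_vars_of_eval_update_ne (mem_filter.1 hi).2)
    he.injOn).trans_lt t.card_vars_lt_two_pow_depth

end DT

theorem assemble_update (n k : ℕ) (x : Fin n → Bool) (t : List Bool) (i : Fin n) (b : Bool) :
    assemble n k (Function.update x i b) t =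
      Function.update (assemble n k x t) (Fin.castLE (Nat.le_add_right n (2 * k)) i) b := by
  funext j
  by_cases hj : j = Fin.castLE (Nat.le_add_right n (2 * k)) i
  · subst hj
    simp [assemble]
  · rw [Function.update_of_ne hj]
    unfold assemble
    split_ifs with hjn
    · exact Function.update_of_ne (fun h => hj (Fin.ext (by simp [← h]))) _ _
    · rfl

theorem DependsOnVar.exists_eq_false_update_eq_true {m : ℕ} {f : (Fin m → Bool) → Bool}
    {i : Fin m} (h : DependsOnVar f i) :
    ∃ w, f w = false ∧ f (Function.update w i (!w i)) = true := by
  obtain ⟨x, hx⟩ := h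
  cases hfx : f x
  · exact ⟨x, hfx, by simpa [hfx] using hx.symm⟩
  · refine ⟨Function.update x i (!x i), by simpa [hfx] using hx.symm, ?_⟩
    simpa using hfx

theorem sum_filter_add_sum_filter_le {R : Type*} [Fintype R] {wt : R → ℝ}
    (hwt : ∀ r, 0 ≤ wt r) (hsum : ∑ r, wt r = 1) (P Q : R → Prop)
    [DecidablePred P] [DecidablePred Q] :
    ∑ r ∈ univ.filter P, wt r + ∑ r ∈ univ.filter Q, wt r ≤
      1 + ∑ r ∈ univ.filter (fun r => P r ∧ Q r), wt r := by
  classical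
  rw [← sum_union_inter, filter_and, ← hsum]
  linarith [sum_le_sum_of_subset_of_nonneg (subset_univ (univ.filter P ∪ univ.filter Q))
    fun r _ _ => hwt r]

theorem sum_sum_filter_eq_sum_mul_card {R ι : Type*} [Fintype R] [Fintype ι] (wt : R → ℝ)
    (P : R → ι → Prop) [∀ r i, Decidable (P r i)] :
    ∑ i, ∑ r ∈ univ.filter (P · i), wt r = ∑ r, wt r * #{i | P r i} := by
  simp_rw [sum_filter, card_filter, Nat.cast_sum, mul_sum]
  rw [sum_comm]
  simp

theorem card_le_three_mul_of_forall_two_thirds_le {R ι : Type*} [Fintype R] [Fintype ι]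
    {wt : R → ℝ} (hwt : ∀ r, 0 ≤ wt r) (hsum : ∑ r, wt r = 1) (P Q : R → ι → Prop)
    [∀ r i, Decidable (P r i)] [∀ r i, Decidable (Q r i)] (N : ℕ)
    (hN : ∀ r, #{i | P r i ∧ Q r i} ≤ N)
    (hP : ∀ i, 2 / 3 ≤ ∑ r ∈ univ.filter (P · i), wt r)
    (hQ : ∀ i, 2 / 3 ≤ ∑ r ∈ univ.filter (Q · i), wt r) :
    (Fintype.card ι : ℝ) ≤ 3 * N := by
  have hboth (i : ι) : 1 / 3 ≤ ∑ r ∈ univ.filter (fun r => P r i ∧ Q r i), wt r := by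
    linarith [hP i, hQ i, sum_filter_add_sum_filter_le hwt hsum (P · i) (Q · i)]
  calc (Fintype.card ι : ℝ)
    _ = 3 * ∑ _i : ι, (1 / 3 : ℝ) := by
      rw [sum_const, card_univ, nsmul_eq_mul]; ring
    _ ≤ 3 * ∑ i, ∑ r ∈ univ.filter (fun r => P r i ∧ Q r i), wt r := by
      gcongr with i; exact hboth i
    _ = 3 * ∑ r, wt r * #{i | P r i ∧ Q r i} := by
      rw [sum_sum_filter_eq_sum_mul_card]
    _ ≤ 3 * ∑ r, wt r * N := by
      gcongr with r; exacts [hwt r, mod_cast hN r]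
    _ = 3 * N := by rw [← sum_mul, hsum, one_mul]

theorem logb_two_sub_three_le_of_le_three_mul_two_pow {n q : ℕ} (h : (n : ℝ) ≤ 3 * 2 ^ q) :
    Real.logb 2 n - 3 ≤ q := by
  rcases Nat.eq_zero_or_pos n with rfl | hn
  · simpa using (q.cast_nonneg : (0 : ℝ) ≤ q).trans' (by norm_num)
  have h8 : (n : ℝ) ≤ 2 ^ ((q + 3 : ℕ) : ℝ) := by
    rw [Real.rpow_natCast, pow_add]
    linarith [pow_pos (two_pos : (0 : ℝ) < 2) q]
  have := Real.logb_le_logb_of_le one_lt_two (by exact_mod_cast hn) h8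
  rw [Real.logb_rpow two_pos (by norm_num)] at this
  push_cast at this
  linarith

/-- Randomised verifier lower bound: if `f` depends on all its variables and
`(A,B,T)` is a valid debate system for `f`, then any randomised decision tree
(a finitely supported distribution over deterministic trees) that computes the
verifier function correctly with probability at least `2/3` on every input `x`
and every valid transcript for `x` must make at least `log₂ n - 3` queries in
the worst case. -/
theorem stmt_14 (n k q : ℕ) (f : (Fin n → Bool) → Bool)
    (hdep : ∀ i : Fin n, DependsOnVar f i)
    (A B : (Fin n → Bool) → List Bool → Bool) (T : DT (n + 2 * k))
    (hsys : ValidSystem n k f A B T)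
    (R : Type) [Fintype R] (trees : R → DT (n + 2 * k)) (wt : R → ℝ)
    (hwt : ∀ r, 0 ≤ wt r) (hsum : ∑ r : R, wt r = 1)
    (hdepth : ∀ r, (trees r).depth ≤ q)
    (hcorrect : ∀ (x : Fin n → Bool) (tr : List Bool),
      ValidTranscript n k f A B x tr →
      2 / 3 ≤ ∑ r ∈ Finset.univ.filter
        (fun r => (trees r).eval (assemble n k x tr) = T.eval (assemble n k x tr)),
        wt r) :
    Real.logb 2 n - 3 ≤ (q : ℝ) := by
  choose w hw0 hw1 using fun i => (hdep i).exists_eq_false_update_eq_true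
  set w' := fun i => Function.update (w i) i (!w i i)
  set tr := fun i => play (A (w i)) (B (w' i)) k
  have hT0 (i) : T.eval (assemble n k (w i) (tr i)) = false := (hsys (w i)).1 (hw0 i) _
  have hT1 (i) : T.eval (assemble n k (w' i) (tr i)) = true := (hsys (w' i)).2 (hw1 i) _
  have hcorrect0 (i) : 2 / 3 ≤ ∑ r ∈ univ.filter
      (fun r => (trees r).eval (assemble n k (w i) (tr i)) = false), wt r := by
    have := hcorrect (w i) (tr i) (Or.inl ⟨hw0 i, B (w' i), rfl⟩)
    rwa [hT0 i] at this
  have hcorrect1 (i) : 2 / 3 ≤ ∑ r ∈ univ.filter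
      (fun r => (trees r).eval (assemble n k (w' i) (tr i)) = true), wt r := by
    have := hcorrect (w' i) (tr i) (Or.inr ⟨hw1 i, A (w i), rfl⟩)
    rwa [hT1 i] at this
  have hseparated (r) : #{i | (trees r).eval (assemble n k (w i) (tr i)) = false ∧
      (trees r).eval (assemble n k (w' i) (tr i)) = true} ≤ 2 ^ q := by
    have hflip := (trees r).card_filter_eval_update_ne_lt
      (Fin.castLE_injective (Nat.le_add_right n (2 * k)))
      (fun i => assemble n k (w i) (tr i)) (fun i => !w i i)
    refine (card_le_card fun i hi => ?_).trans
      (hflip.le.trans (Nat.pow_le_pow_right two_pos (hdepth r)))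
    simp only [mem_filter, mem_univ, true_and, w', assemble_update] at hi ⊢
    rw [hi.1, hi.2]
    decide
  apply logb_two_sub_three_le_of_le_three_mul_two_pow
  simpa using card_le_three_mul_of_forall_two_thirds_le hwt hsum _ _ _ hseparated
    hcorrect0 hcorrect1
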